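/- Let F be a field of characteristic 2, let q be an anisotropic totally singular quadratic form over F on a finite-dimensional F-vector space V, and let L/F be a separable algebraic field extension. Then the scalar extension q_L is anisotropic over L. -/

import Mathlib

/-!
Choose an `F`-basis `(bᵢ)` of `L` and write `z = ∑ bᵢ ⊗ vᵢ`. A totally singular form is additive,
so `Q z = ∑ q(vᵢ) bᵢ²`. Since `L/F` is separable, the Frobenius images `bᵢ²` are again `F`-linearly
independent, so `Q z = 0` forces every `q(vᵢ) = 0`, hence every `vᵢ = 0` by anisotropy of `q`.
-/

open scoped TensorProduct

/-- `Q` is the scalar extension of the quadratic form `q` to `L`: it satisfies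
`Q (c ⊗ x) = c² ⬝ q x` and its polar form is the base change of the polar form of `q`
(a bilinear form is determined by its values on pure tensors). -/
def IsScalarExt (F : Type*) {L : Type*} [Field F] [Field L] [Algebra F L]
    {V : Type*} [AddCommGroup V] [Module F V]
    (q : QuadraticForm F V) (Q : QuadraticForm L (L ⊗[F] V)) : Prop :=
  (∀ (c : L) (x : V), Q (c ⊗ₜ[F] x) = c ^ 2 * algebraMap F L (q x)) ∧
  ∀ (c d : L) (x y : V),
    QuadraticMap.polar (⇑Q) (c ⊗ₜ[F] x) (d ⊗ₜ[F] y) =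
      c * d * algebraMap F L (QuadraticMap.polar (⇑q) x y)

namespace QuadraticMap

variable {R M N : Type*} [CommRing R] [AddCommGroup M] [Module R M] [AddCommGroup N] [Module R N]
  {Q : QuadraticMap R M N}

theorem map_add_of_polar_eq_zero (h : ∀ x y, polar Q x y = 0) (x y : M) :
    Q (x + y) = Q x + Q y := by
  simpa [polar, sub_sub, sub_eq_zero] using h x y

theorem map_sum_of_polar_eq_zero (h : ∀ x y, polar Q x y = 0) {ι : Type*} (s : Finset ι)
    (f : ι → M) : Q (∑ i ∈ s, f i) = ∑ i ∈ s, Q (f i) :=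
  map_sum (AddMonoidHom.mk' Q (map_add_of_polar_eq_zero h)) f s

end QuadraticMap

namespace IsScalarExt

variable {F L V : Type*} [Field F] [Field L] [Algebra F L] [AddCommGroup V] [Module F V]
  {q : QuadraticForm F V} {Q : QuadraticForm L (L ⊗[F] V)}

theorem polar_eq_zero (hQ : IsScalarExt F q Q) (hq : ∀ x y, QuadraticMap.polar q x y = 0)
    (z w : L ⊗[F] V) : QuadraticMap.polar Q z w = 0 := by
  induction z using TensorProduct.induction_on with
  | zero => exact QuadraticMap.polar_zero_left Q w
  | add z₁ z₂ h₁ h₂ => rw [QuadraticMap.polar_add_left, h₁, h₂, add_zero]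
  | tmul c x =>
    induction w using TensorProduct.induction_on with
    | zero => exact QuadraticMap.polar_zero_right Q _
    | add w₁ w₂ h₁ h₂ => rw [QuadraticMap.polar_add_right, h₁, h₂, add_zero]
    | tmul d y => rw [hQ.2, hq, map_zero, mul_zero]

theorem apply_finsuppSum_tmul (hQ : IsScalarExt F q Q) (hq : ∀ x y, QuadraticMap.polar q x y = 0)
    {ι : Type*} (b : ι → L) (v : ι →₀ V) :
    Q (v.sum fun i x ↦ b i ⊗ₜ x) = ∑ i ∈ v.support, q (v i) • b i ^ 2 := by
  rw [Finsupp.sum, QuadraticMap.map_sum_of_polar_eq_zero (hQ.polar_eq_zero hq)]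
  refine Finset.sum_congr rfl fun i _ ↦ ?_
  rw [hQ.1, Algebra.smul_def, mul_comm]

end IsScalarExt

theorem stmt_6_general {F L : Type*} [Field F] [CharP F 2] [Field L] [Algebra F L]
    [Algebra.IsSeparable F L]
    {V : Type*} [AddCommGroup V] [Module F V]
    (q : QuadraticForm F V)
    (hts : ∀ x y : V, QuadraticMap.polar (⇑q) x y = 0)
    (han : q.Anisotropic)
    (Q : QuadraticForm L (L ⊗[F] V)) (hQ : IsScalarExt F q Q) :
    Q.Anisotropic := by
  intro z hz
  let b := Module.Basis.ofVectorSpace F L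
  obtain ⟨v, rfl⟩ := TensorProduct.eq_repr_basis_left b z
  have hsq : LinearIndependent F (b · ^ 2) :=
    b.linearIndependent.map_pow_expChar_pow_of_isSeparable 2 1
  rw [hQ.apply_finsuppSum_tmul hts] at hz
  have hv : v = 0 := by
    ext i
    by_contra hi
    exact hi (han _ (linearIndependent_iff'.mp hsq _ _ hz i (Finsupp.mem_support_iff.mpr hi)))
  simp [hv]

/-- an anisotropic totally singular quadratic form in characteristic 2 stays
anisotropic under separable algebraic field extensions. -/
theorem stmt_6 {F L : Type*} [Field F] [CharP F 2] [Field L] [Algebra F L]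
    [Algebra.IsAlgebraic F L] [Algebra.IsSeparable F L]
    {V : Type*} [AddCommGroup V] [Module F V] [FiniteDimensional F V]
    (q : QuadraticForm F V)
    (hts : ∀ x y : V, QuadraticMap.polar (⇑q) x y = 0)
    (han : q.Anisotropic)
    (Q : QuadraticForm L (L ⊗[F] V)) (hQ : IsScalarExt F q Q) :
    Q.Anisotropic :=
  stmt_6_general q hts han Q hQ
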